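/- Let A be an (N−1) × (N−1) symmetric complex matrix, B a row vector of length N−1, c a nonzero scalar, and l a scalar. Then the rank of the (N+1) × (N+1) symmetric block matrix M = [[0, 0, c], [0ᵗ, A, Bᵗ], [c, B, 2l]] (blocks of sizes 1, N−1, 1) equals 2 + rank A. -/
import Mathlib

open Matrix

section Helpers

variable {R : Type*} [Field R]

/-- The submodule product is linearly equivalent to the product of submodules. -/
def prodSubEquiv {M N : Type*} [AddCommGroup M] [AddCommGroup N] [Module R M] [Module R N]
    (p : Submodule R M) (q : Submodule R N) : (p.prod q) ≃ₗ[R] p × q where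
  toFun x := (⟨x.1.1, x.2.1⟩, ⟨x.1.2, x.2.2⟩)
  invFun y := ⟨(y.1.1, y.2.1), ⟨y.1.2, y.2.2⟩⟩
  map_add' _ _ := rfl
  map_smul' _ _ := rfl
  left_inv _ := rfl
  right_inv _ := rfl

lemma my_range_prodMap {M₁ M₂ N₁ N₂ : Type*} [AddCommGroup M₁] [AddCommGroup M₂]
    [AddCommGroup N₁] [AddCommGroup N₂] [Module R M₁] [Module R M₂] [Module R N₁] [Module R N₂]
    (f : M₁ →ₗ[R] N₁) (g : M₂ →ₗ[R] N₂) :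
    LinearMap.range (f.prodMap g) = (LinearMap.range f).prod (LinearMap.range g) := by
  ext ⟨u, v⟩
  constructor
  · rintro ⟨⟨a, b⟩, h⟩
    exact ⟨⟨a, (Prod.ext_iff.1 h).1⟩, ⟨b, (Prod.ext_iff.1 h).2⟩⟩
  · rintro ⟨⟨a, ha⟩, ⟨b, hb⟩⟩
    exact ⟨(a, b), Prod.ext ha hb⟩

lemma rank_fromBlocks_diag {m n : Type*} [Fintype m] [Fintype n] [DecidableEq m] [DecidableEq n]
    (A : Matrix m m ℂ) (D : Matrix n n ℂ) :
    (fromBlocks A 0 0 D).rank = A.rank + D.rank := by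
  classical
  set e := LinearEquiv.sumArrowLequivProdArrow m n ℂ ℂ with he
  have key : (fromBlocks A 0 0 D).mulVecLin
      = e.symm.toLinearMap ∘ₗ ((A.mulVecLin.prodMap D.mulVecLin) ∘ₗ e.toLinearMap) := by
    apply LinearMap.ext
    intro x
    funext i
    cases i <;>
      simp [he, mulVecLin, fromBlocks_mulVec, LinearEquiv.sumArrowLequivProdArrow,
        Equiv.sumArrowEquivProdArrow, Matrix.zero_mulVec]
  rw [Matrix.rank, key, LinearMap.range_comp,
    LinearMap.range_comp_of_range_eq_top _ (LinearEquiv.range e),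
    LinearEquiv.finrank_map_eq, my_range_prodMap]
  rw [(prodSubEquiv (LinearMap.range A.mulVecLin) (LinearMap.range D.mulVecLin)).finrank_eq]
  rw [Module.finrank_prod]
  rfl

end Helpers

/-- Let `A` be a `k × k` symmetric complex matrix, `B` a row vector of length `k`,
`c ≠ 0` and `l` scalars.  The `(k+2) × (k+2)` symmetric block matrix
`M = [[0, 0, c], [0ᵗ, A, Bᵗ], [c, B, 2l]]` has rank `2 + rank A`.
(Here `k = N − 1` in the notation of the source.) -/
theorem bordered_block_matrix_rank (k : ℕ) (A : Matrix (Fin k) (Fin k) ℂ)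
    (hA : Aᵀ = A) (B : Fin k → ℂ) (c l : ℂ) (hc : c ≠ 0) :
    (Matrix.of (fun i j : Fin 1 ⊕ (Fin k ⊕ Fin 1) =>
      match i, j with
      | Sum.inl _, Sum.inl _ => (0 : ℂ)
      | Sum.inl _, Sum.inr (Sum.inl _) => 0
      | Sum.inl _, Sum.inr (Sum.inr _) => c
      | Sum.inr (Sum.inl i'), Sum.inl _ => 0
      | Sum.inr (Sum.inl i'), Sum.inr (Sum.inl j') => A i' j'
      | Sum.inr (Sum.inl i'), Sum.inr (Sum.inr _) => B i'
      | Sum.inr (Sum.inr _), Sum.inl _ => c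
      | Sum.inr (Sum.inr _), Sum.inr (Sum.inl j') => B j'
      | Sum.inr (Sum.inr _), Sum.inr (Sum.inr _) => 2 * l)).rank = 2 + A.rank := by
  classical
  -- blocks
  set Y : Matrix (Fin 1) (Fin k ⊕ Fin 1) ℂ :=
    Matrix.of (fun _ q => Sum.elim (fun _ => (0 : ℂ)) (fun _ => c) q) with hY
  set Z : Matrix (Fin k ⊕ Fin 1) (Fin 1) ℂ :=
    Matrix.of (fun p _ => Sum.elim (fun _ => (0 : ℂ)) (fun _ => c) p) with hZ
  set W : Matrix (Fin k ⊕ Fin 1) (Fin k ⊕ Fin 1) ℂ :=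
    fromBlocks A (Matrix.of fun i _ => B i) (Matrix.of fun _ j => B j)
      (Matrix.of fun _ _ => 2 * l) with hW
  set u : Matrix (Fin k ⊕ Fin 1) (Fin 1) ℂ :=
    Matrix.of (fun p _ => Sum.elim (fun i => B i / c) (fun _ => l / c) p) with hu
  set v : Matrix (Fin 1) (Fin k ⊕ Fin 1) ℂ :=
    Matrix.of (fun _ q => Sum.elim (fun i => B i / c) (fun _ => l / c) q) with hv
  set N : Matrix (Fin 1 ⊕ (Fin k ⊕ Fin 1)) (Fin 1 ⊕ (Fin k ⊕ Fin 1)) ℂ :=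
    fromBlocks 0 Y Z (fromBlocks A 0 0 0) with hN
  set P : Matrix (Fin 1 ⊕ (Fin k ⊕ Fin 1)) (Fin 1 ⊕ (Fin k ⊕ Fin 1)) ℂ :=
    fromBlocks 1 0 u 1 with hP
  set Q : Matrix (Fin 1 ⊕ (Fin k ⊕ Fin 1)) (Fin 1 ⊕ (Fin k ⊕ Fin 1)) ℂ :=
    fromBlocks 1 v 0 1 with hQ
  have hM : (Matrix.of (fun i j : Fin 1 ⊕ (Fin k ⊕ Fin 1) =>
      match i, j with
      | Sum.inl _, Sum.inl _ => (0 : ℂ)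
      | Sum.inl _, Sum.inr (Sum.inl _) => 0
      | Sum.inl _, Sum.inr (Sum.inr _) => c
      | Sum.inr (Sum.inl i'), Sum.inl _ => 0
      | Sum.inr (Sum.inl i'), Sum.inr (Sum.inl j') => A i' j'
      | Sum.inr (Sum.inl i'), Sum.inr (Sum.inr _) => B i'
      | Sum.inr (Sum.inr _), Sum.inl _ => c
      | Sum.inr (Sum.inr _), Sum.inr (Sum.inl j') => B j'
      | Sum.inr (Sum.inr _), Sum.inr (Sum.inr _) => 2 * l)) = P * N * Q := by
    have hPN : P * N = fromBlocks 0 Y Z (u * Y + fromBlocks A 0 0 0) := by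
      rw [hP, hN, fromBlocks_multiply]
      congr 1 <;> simp
    rw [hPN, hQ, fromBlocks_multiply]
    have hcorner : Z * v + (u * Y + fromBlocks A 0 0 0) = W := by
      ext p q
      rcases p with i | x <;> rcases q with j | y <;>
        simp [hZ, hv, hu, hY, hW, fromBlocks, Matrix.mul_apply, Fin.sum_univ_one,
          div_mul_cancel₀, mul_div_cancel₀, hc, two_mul]
    ext i j
    rcases i with i | (i | i) <;> rcases j with j | (j | j) <;>
      simp [hcorner, hY, hZ, hW, hu, hv, fromBlocks, Matrix.mul_apply, Fin.sum_univ_one,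
        div_mul_cancel₀, mul_div_cancel₀, hc] <;>
      ring
  rw [hM]
  have hdetP : IsUnit P.det := by
    rw [hP, det_fromBlocks_zero₁₂]
    simp
  have hdetQ : IsUnit Q.det := by
    rw [hQ, det_fromBlocks_zero₂₁]
    simp
  rw [Matrix.rank_mul_eq_left_of_isUnit_det _ _ hdetQ,
    Matrix.rank_mul_eq_right_of_isUnit_det _ _ hdetP]
  -- now compute rank N
  set C' : Matrix (Fin 1 ⊕ Fin 1) (Fin 1 ⊕ Fin 1) ℂ :=
    fromBlocks 0 (Matrix.of fun _ _ => c) (Matrix.of fun _ _ => c) 0 with hC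
  have hrankC : C'.rank = 2 := by
    have hmul : C' * ((c * c)⁻¹ • C') = 1 := by
      ext p q
      rcases p with p | p <;> rcases q with q | q <;>
        simp [hC, fromBlocks, Matrix.mul_apply, Fintype.sum_sum_type, Fin.sum_univ_one,
          Matrix.one_apply] <;>
        (try field_simp) <;> simp [Subsingleton.elim p q]
    have hunit : IsUnit C' := ⟨⟨C', (c * c)⁻¹ • C', hmul, mul_eq_one_comm.mp hmul⟩, rfl⟩
    rw [Matrix.rank_of_isUnit _ hunit]
    simp
  -- equiv reindexing N to block diagonal
  let σ : (Fin k ⊕ (Fin 1 ⊕ Fin 1)) ≃ (Fin 1 ⊕ (Fin k ⊕ Fin 1)) :=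
    ((Equiv.sumAssoc (Fin k) (Fin 1) (Fin 1)).symm.trans
      ((Equiv.sumComm (Fin k) (Fin 1)).sumCongr (Equiv.refl (Fin 1)))).trans
      (Equiv.sumAssoc (Fin 1) (Fin k) (Fin 1))
  have hNsub : N.submatrix σ σ = fromBlocks A 0 0 C' := by
    ext p q
    rcases p with i | (x | x) <;> rcases q with j | (y | y) <;>
      simp [σ, hN, hY, hZ, hC, fromBlocks, Equiv.sumAssoc, Equiv.sumComm]
  have : (fromBlocks A 0 0 C').rank = A.rank + 2 := by
    rw [rank_fromBlocks_diag, hrankC]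
  rw [← Matrix.rank_submatrix N σ σ, hNsub, this, add_comm]
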